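/- Given a modified PCP instance over Σ = {A,B} with pairs (u_i, v_i) padded with • to common length m, there exists an index sequence j₁…j_k ∈ {1,…,n}⁺ with trim(u_{j₁}…u_{j_k}) = trim(v_{j₁}…v_{j_k}) if and only if there exists an index sequence j₁…j_k such that ρ(trim(u_{j₁}…u_{j_k})·Z') + ρ̄(trim(v_{j₁}…v_{j_k})·Z') = 1. -/

import Mathlib

inductive S3 where
  | A : S3
  | B : S3
  | dot : S3
deriving DecidableEq

inductive L3 where
  | A : L3
  | B : L3
  | Z' : L3
deriving DecidableEq

def trim : List S3 → List L3
  | [] => []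
  | S3.A :: w => L3.A :: trim w
  | S3.B :: w => L3.B :: trim w
  | S3.dot :: w => trim w

def theta : L3 → ℚ
  | L3.A => 1
  | L3.B => 0
  | L3.Z' => 1

def thetaBar : L3 → ℚ
  | L3.A => 0
  | L3.B => 1
  | L3.Z' => 1

def rho : List L3 → ℚ
  | [] => 0
  | x :: w => theta x * (1/2) + (1/2) * rho w

def rhoBar : List L3 → ℚ
  | [] => 0
  | x :: w => thetaBar x * (1/2) + (1/2) * rhoBar w

/-!
On letters other than `Z'` we have `θ + θ̄ = 1`, so for a trimmed word `v` the letters of `v`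
contribute `1 - 2^{-|v|}` to `ρ(v·Z') + ρ̄(v·Z')` and the two final `Z'` digits the remaining
`2^{-|v|}`; hence `ρ̄(v·Z') = 1 - ρ(v·Z')`.
The condition `ρ(u·Z') + ρ̄(v·Z') = 1` thus says `ρ(u·Z') = ρ(v·Z')`, and `w ↦ ρ(w·Z')` is
injective on `{A,B}`-words because `ρ(w·Z')` is a finite binary expansion whose last digit is `1`.
-/

lemma Z'_notMem_trim : ∀ w : List S3, L3.Z' ∉ trim w
  | [] => List.not_mem_nil
  | S3.A :: w => by simpa [trim] using Z'_notMem_trim w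
  | S3.B :: w => by simpa [trim] using Z'_notMem_trim w
  | S3.dot :: w => Z'_notMem_trim w

lemma theta_add_thetaBar {x : L3} (hx : x ≠ L3.Z') : theta x + thetaBar x = 1 := by
  cases x <;> simp_all [theta, thetaBar]

lemma rho_append_Z'_mem_Ioo (w : List L3) : rho (w ++ [L3.Z']) ∈ Set.Ioo 0 1 := by
  induction w with
  | nil => norm_num [rho, theta]
  | cons x w ih =>
    obtain ⟨hpos, hlt⟩ := ih
    have htheta : 0 ≤ theta x ∧ theta x ≤ 1 := by cases x <;> norm_num [theta]
    simp only [List.cons_append, rho, Set.mem_Ioo]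
    constructor <;> linarith

lemma rhoBar_append_Z' {v : List L3} (hv : L3.Z' ∉ v) :
    rhoBar (v ++ [L3.Z']) = 1 - rho (v ++ [L3.Z']) := by
  induction v with
  | nil => norm_num [rho, rhoBar, theta, thetaBar]
  | cons y v ih =>
    rw [List.mem_cons, not_or] at hv
    have hsum := theta_add_thetaBar (Ne.symm hv.1)
    simp only [List.cons_append, rho, rhoBar, ih hv.2]
    linarith

lemma rho_append_Z'_inj {u v : List L3} (hu : L3.Z' ∉ u) (hv : L3.Z' ∉ v) :
    rho (u ++ [L3.Z']) = rho (v ++ [L3.Z']) ↔ u = v := by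
  refine ⟨fun h => ?_, fun h => h ▸ rfl⟩
  induction u generalizing v with
  | nil =>
    cases v with
    | nil => rfl
    | cons y v =>
      have := rho_append_Z'_mem_Ioo v
      cases y <;> simp_all [rho, theta, Set.mem_Ioo]
  | cons x u ih =>
    cases v with
    | nil =>
      have := rho_append_Z'_mem_Ioo u
      cases x <;> simp_all [rho, theta, Set.mem_Ioo]
    | cons y v =>
      rw [List.mem_cons, not_or] at hu hv
      have hu' := rho_append_Z'_mem_Ioo u
      have hv' := rho_append_Z'_mem_Ioo v
      -- the tails contribute less than the leading digit, so the leading letters agree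
      obtain rfl : x = y := by
        cases x <;> cases y <;> simp_all [rho, theta, Set.mem_Ioo] <;> linarith
      simp only [List.cons_append, rho] at h
      rw [ih hu.2 hv.2 (by linarith)]

lemma rho_add_rhoBar_append_Z'_eq_one_iff {u v : List L3} (hu : L3.Z' ∉ u) (hv : L3.Z' ∉ v) :
    rho (u ++ [L3.Z']) + rhoBar (v ++ [L3.Z']) = 1 ↔ u = v := by
  rw [rhoBar_append_Z' hv, ← rho_append_Z'_inj hu hv]
  constructor <;> intro h <;> linarith

theorem modifiedPCP_iff_general (pairs : List (List S3 × List S3)) :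
    (∃ js : List (Fin pairs.length), js ≠ [] ∧
        trim ((js.map (fun j => (pairs.get j).1)).flatten)
          = trim ((js.map (fun j => (pairs.get j).2)).flatten))
    ↔ (∃ js : List (Fin pairs.length), js ≠ [] ∧
        rho (trim ((js.map (fun j => (pairs.get j).1)).flatten) ++ [L3.Z'])
          + rhoBar (trim ((js.map (fun j => (pairs.get j).2)).flatten) ++ [L3.Z']) = 1) :=
  exists_congr fun _ => and_congr_right fun _ =>
    (rho_add_rhoBar_append_Z'_eq_one_iff (Z'_notMem_trim _) (Z'_notMem_trim _)).symm

/-- Given a modified PCP instance with pairs (u_i, v_i) ∈ Σ^m × Σ^m, there is a nonempty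
index sequence with trim(u_{j₁}…u_{j_k}) = trim(v_{j₁}…v_{j_k}) iff there is a nonempty
index sequence with ρ(trim(u_{j₁}…u_{j_k})·Z') + ρ̄(trim(v_{j₁}…v_{j_k})·Z') = 1. -/
theorem modifiedPCP_iff (m : ℕ) (pairs : List (List S3 × List S3))
    (hlen : ∀ p ∈ pairs, p.1.length = m ∧ p.2.length = m) :
    (∃ js : List (Fin pairs.length), js ≠ [] ∧
        trim ((js.map (fun j => (pairs.get j).1)).flatten)
          = trim ((js.map (fun j => (pairs.get j).2)).flatten))
    ↔ (∃ js : List (Fin pairs.length), js ≠ [] ∧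
        rho (trim ((js.map (fun j => (pairs.get j).1)).flatten) ++ [L3.Z'])
          + rhoBar (trim ((js.map (fun j => (pairs.get j).2)).flatten) ++ [L3.Z']) = 1) :=
  modifiedPCP_iff_general pairs
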